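/- Let (W,S) be a finite crystallographic Coxeter system with (normalized) root system Δ, and let ρ be the half-sum of the positive roots. Then for every positive root γ one has 2(ρ,γ∨) − 1 ≥ l(s_γ), where γ∨ = 2γ/(γ,γ), s_γ is the reflection in γ, and l denotes the Coxeter length function on W. -/

import Mathlib

open scoped BigOperators Classical

noncomputable section

/-- The simple root `α_s` realized as a basis vector of `B → ℝ`. -/
def alr {B : Type} [DecidableEq B] (s : B) : B → ℝ := Pi.single s 1

/-- A geometric realization of a finite Coxeter system `(W,S)`:  the vector space `V`
is `B → ℝ`, with the simple root `α_s` realized as the basis vector `alr s`;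
the symmetric bilinear form satisfies `(α_s, α_t) = -cos (π / m(s,t)) √((α_s,α_s)(α_t,α_t))`
(so that each simple root may be rescaled, e.g. by a crystallographic normalization);
`σ` is the geometric representation and `refl` assigns to every root `γ = w(α_s)` the
reflection `s_γ = w s w⁻¹`. -/
structure GeomCoxeterSystem (B : Type) [Fintype B] [DecidableEq B]
    (W : Type) [Group W] where
  M : CoxeterMatrix B
  cs : CoxeterSystem M W
  finW : Finite W
  bil : (B → ℝ) →ₗ[ℝ] (B → ℝ) →ₗ[ℝ] ℝ
  bil_symm : ∀ u v, bil u v = bil v u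
  bil_diag_pos : ∀ s : B, 0 < bil (alr s) (alr s)
  bil_offdiag : ∀ s t : B, s ≠ t →
    bil (alr s) (alr t) =
      -Real.cos (Real.pi / (M s t)) *
        Real.sqrt (bil (alr s) (alr s) * bil (alr t) (alr t))
  σ : W →* ((B → ℝ) ≃ₗ[ℝ] (B → ℝ))
  σ_simple : ∀ (s : B) (v : B → ℝ),
    σ (cs.simple s) v =
      v - (2 * bil (alr s) v / bil (alr s) (alr s)) • alr s
  refl : (B → ℝ) → W
  refl_spec : ∀ (w : W) (s : B), refl (σ w (alr s)) = w * cs.simple s * w⁻¹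

namespace GeomCoxeterSystem

variable {B : Type} [Fintype B] [DecidableEq B] {W : Type} [Group W]
variable (g : GeomCoxeterSystem B W)


/-- The root system `Δ` of `(W,S)`. -/
def roots : Set (B → ℝ) := Set.range fun p : W × B => g.σ p.1 (alr p.2)

/-- The positive roots `Δ₊`. -/
def posRoots : Set (B → ℝ) := {v ∈ g.roots | ∀ s, 0 ≤ v s}

/-- `(W,S)` is crystallographic: the (normalized) root system satisfies
`2(γ,γ')/(γ,γ) ∈ ℤ` for all roots `γ, γ'`. -/
def IsCrystallographic : Prop :=
  ∀ γ ∈ g.roots, ∀ γ' ∈ g.roots, ∃ k : ℤ, 2 * g.bil γ γ' / g.bil γ γ = (k : ℝ)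

/-- The generator `[γ]` of the free algebra when `γ` is a root (and `0` otherwise). -/
def brkF (v : B → ℝ) : FreeAlgebra ℝ g.roots :=
  if h : v ∈ g.roots then FreeAlgebra.ι ℝ (⟨v, h⟩ : g.roots) else 0

/-- `γ : ℤ → V` lists (cyclically, with `γ_{j+m} = -γ_j`) the positive roots
`γ_0, …, γ_{m-1}` of a rank-two root subsystem of type `I₂(m)`, ordered so that
`ℝ_{≥0}⟨γ_i, γ_{i+1}⟩ ∩ Δ₊ = {γ_i, γ_{i+1}}`. -/
structure IsChain (m : ℕ) (γ : ℤ → (B → ℝ)) : Prop where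
  two_le : 2 ≤ m
  anti : ∀ j : ℤ, γ (j + m) = -γ j
  mem_pos : ∀ i : ℤ, 0 ≤ i → i < m → γ i ∈ g.posRoots
  inj : ∀ i j : ℤ, 0 ≤ i → i < m → 0 ≤ j → j < m → γ i = γ j → i = j
  indep : LinearIndependent ℝ ![γ 0, γ 1]
  cone : ∀ i : ℤ, 0 ≤ i → i ≤ (m : ℤ) - 2 →
    {v | v ∈ g.posRoots ∧ ∃ a b : ℝ, 0 ≤ a ∧ 0 ≤ b ∧ v = a • γ i + b • γ (i + 1)} =
      {γ i, γ (i + 1)}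
  closed : ∀ v ∈ g.roots, v ∈ Submodule.span ℝ {γ 0, γ 1} → ∃ j : ℤ, v = γ j

/-- The ordered product `[γ_0][γ_1]⋯[γ_{l-1}]` in the free algebra. -/
def chainProd (γ : ℤ → (B → ℝ)) (l : ℕ) : FreeAlgebra ℝ g.roots :=
  ((List.range l).map fun i => g.brkF (γ i)).prod

/-- The reversed product `[γ_{l-1}]⋯[γ_1][γ_0]` in the free algebra. -/
def chainProdRev (γ : ℤ → (B → ℝ)) (l : ℕ) : FreeAlgebra ℝ g.roots :=
  (((List.range l).reverse).map fun i => g.brkF (γ i)).prod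

/-- The defining relations (i)–(iv) of the bracket algebra `BE(W,S)`. -/
inductive BRel : FreeAlgebra ℝ g.roots → FreeAlgebra ℝ g.roots → Prop
  | neg (γ : B → ℝ) (h : γ ∈ g.roots) : BRel (g.brkF (-γ)) (-(g.brkF γ))
  | sq (γ : B → ℝ) (h : γ ∈ g.roots) : BRel (g.brkF γ * g.brkF γ) 0
  | quad (m : ℕ) (γ : ℤ → (B → ℝ)) (hc : g.IsChain m γ) (k : ℕ) (hk1 : 1 ≤ k)
      (hk2 : 2 * k ≤ m) :
      BRel (∑ i ∈ Finset.range (m + 1), g.brkF (γ i) * g.brkF (γ (i + k))) 0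
  | fourTerm (m : ℕ) (γ : ℤ → (B → ℝ)) (hc : g.IsChain m γ) (hm : 4 ≤ m) :
      BRel (g.brkF (γ (m / 2 - 1)) * g.chainProd γ (2 * (m / 2 - 1) + 1)
          + g.chainProd γ (2 * (m / 2 - 1) + 1) * g.brkF (γ (m / 2 - 1))
          + g.brkF (γ (m / 2 - 1)) * g.chainProdRev γ (2 * (m / 2 - 1) + 1)
          + g.chainProdRev γ (2 * (m / 2 - 1) + 1) * g.brkF (γ (m / 2 - 1))) 0

/-- The bracket algebra `BE(W,S)`. -/
def BE : Type := RingQuot g.BRel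

instance : Ring g.BE := inferInstanceAs (Ring (RingQuot g.BRel))
instance : Algebra ℝ g.BE := inferInstanceAs (Algebra ℝ (RingQuot g.BRel))

/-- The element `[γ]` of the bracket algebra `BE(W,S)`. -/
def brk (v : B → ℝ) : g.BE := RingQuot.mkAlgHom ℝ g.BRel (g.brkF v)

/-- Only the relations (i)–(iii): the quotient used to check that commutativity of
Dunkl elements only uses the quadratic relations. -/
inductive BRel3 : FreeAlgebra ℝ g.roots → FreeAlgebra ℝ g.roots → Prop
  | neg (γ : B → ℝ) (h : γ ∈ g.roots) : BRel3 (g.brkF (-γ)) (-(g.brkF γ))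
  | sq (γ : B → ℝ) (h : γ ∈ g.roots) : BRel3 (g.brkF γ * g.brkF γ) 0
  | quad (m : ℕ) (γ : ℤ → (B → ℝ)) (hc : g.IsChain m γ) (k : ℕ) (hk1 : 1 ≤ k)
      (hk2 : 2 * k ≤ m) :
      BRel3 (∑ i ∈ Finset.range (m + 1), g.brkF (γ i) * g.brkF (γ (i + k))) 0

/-- The algebra defined by the relations (i)–(iii) only. -/
def BE3 : Type := RingQuot g.BRel3

instance : Ring g.BE3 := inferInstanceAs (Ring (RingQuot g.BRel3))
instance : Algebra ℝ g.BE3 := inferInstanceAs (Algebra ℝ (RingQuot g.BRel3))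

def brk3 (v : B → ℝ) : g.BE3 := RingQuot.mkAlgHom ℝ g.BRel3 (g.brkF v)

/-- `⟨ω_s, γ∨⟩`, the pairing of the fundamental weight `ω_s` with the coroot
`γ∨ = 2γ/(γ,γ)`; in the coordinates of the basis of simple roots this equals
`γ_s (α_s, α_s) / (γ, γ)`. -/
def chevCoeff (s : B) (γ : B → ℝ) : ℝ :=
  γ s * g.bil (alr s) (alr s) / g.bil γ γ

/-- The Chevalley element `η_s = Σ_{γ ∈ Δ₊} ⟨ω_s, γ∨⟩ [γ]` of `BE(W,S)`. -/
def eta (s : B) : g.BE := ∑ᶠ γ ∈ g.posRoots, g.chevCoeff s γ • g.brk γ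

/-- The Dunkl element `θ_s = Σ_{s'} (α_s, α_{s'}) η_{s'}` of `BE(W,S)`. -/
def dunkl (s : B) : g.BE := ∑ s' : B, g.bil (alr s) (alr s') • g.eta s'

def eta3 (s : B) : g.BE3 := ∑ᶠ γ ∈ g.posRoots, g.chevCoeff s γ • g.brk3 γ

def dunkl3 (s : B) : g.BE3 := ∑ s' : B, g.bil (alr s) (alr s') • g.eta3 s'

/-! ### Quantization -/

/-- The coefficient ring `ℝ[q_s : s ∈ S]`. -/
abbrev QR (B : Type) : Type := MvPolynomial B ℝ

/-- `q_γ = q_s` for a simple root `γ = α_s` (junk value `1` otherwise). -/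
def qOf (v : B → ℝ) : QR B :=
  if h : ∃ s : B, v = alr s then MvPolynomial.X h.choose else 1

/-- The half-sum `ρ` of the positive roots. -/
def rho : B → ℝ := (2⁻¹ : ℝ) • ∑ᶠ γ ∈ g.posRoots, γ

/-- `(ρ, γ∨) = 2(ρ,γ)/(γ,γ)`. -/
def pairRho (γ : B → ℝ) : ℝ := 2 * g.bil g.rho γ / g.bil γ γ

/-- The generator `[γ]` in the free algebra over `ℝ[q_s]`. -/
def qbrkF (v : B → ℝ) : FreeAlgebra (QR B) g.roots :=
  if h : v ∈ g.roots then FreeAlgebra.ι (QR B) (⟨v, h⟩ : g.roots) else 0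

def qchainProd (γ : ℤ → (B → ℝ)) (l : ℕ) : FreeAlgebra (QR B) g.roots :=
  ((List.range l).map fun i => g.qbrkF (γ i)).prod

def qchainProdRev (γ : ℤ → (B → ℝ)) (l : ℕ) : FreeAlgebra (QR B) g.roots :=
  (((List.range l).reverse).map fun i => g.qbrkF (γ i)).prod

/-- The defining relations (i)'–(iv)' of the quantized bracket algebra `qBE(W,S)`. -/
inductive QRel : FreeAlgebra (QR B) g.roots → FreeAlgebra (QR B) g.roots → Prop
  | neg (γ : B → ℝ) (h : γ ∈ g.roots) : QRel (g.qbrkF (-γ)) (-(g.qbrkF γ))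
  | sqSimple (s : B) :
      QRel (g.qbrkF (alr s) * g.qbrkF (alr s)) (algebraMap (QR B) _ (MvPolynomial.X s))
  | sqPos (γ : B → ℝ) (h : γ ∈ g.posRoots) (hs : ∀ s : B, γ ≠ alr s) :
      QRel (g.qbrkF γ * g.qbrkF γ) 0
  | quad (m : ℕ) (γ : ℤ → (B → ℝ)) (hc : g.IsChain m γ) (k : ℕ) (hk1 : 1 ≤ k)
      (hk2 : 2 * k ≤ m) :
      QRel (∑ i ∈ Finset.range (m + 1), g.qbrkF (γ i) * g.qbrkF (γ (i + k))) 0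
  | fourTerm (m : ℕ) (γ : ℤ → (B → ℝ)) (hc : g.IsChain m γ) (hm : 4 ≤ m)
      (hl : (g.cs.length (g.refl (γ (m / 2 - 1))) : ℝ) ≠ 2 * g.pairRho (γ (m / 2 - 1)) - 1) :
      QRel (g.qbrkF (γ (m / 2 - 1)) * g.qchainProd γ (2 * (m / 2 - 1) + 1)
          + g.qchainProd γ (2 * (m / 2 - 1) + 1) * g.qbrkF (γ (m / 2 - 1))
          + g.qbrkF (γ (m / 2 - 1)) * g.qchainProdRev γ (2 * (m / 2 - 1) + 1)
          + g.qchainProdRev γ (2 * (m / 2 - 1) + 1) * g.qbrkF (γ (m / 2 - 1))) 0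

/-- The quantized bracket algebra `qBE(W,S)`. -/
def qBE : Type := RingQuot g.QRel

instance : Ring g.qBE := inferInstanceAs (Ring (RingQuot g.QRel))
instance : Algebra (QR B) g.qBE := inferInstanceAs (Algebra (QR B) (RingQuot g.QRel))

/-- The element `[γ]` of `qBE(W,S)`. -/
def qbrk (v : B → ℝ) : g.qBE := RingQuot.mkAlgHom (QR B) g.QRel (g.qbrkF v)

/-- The quantum Chevalley element `η̃_s`. -/
def qeta (s : B) : g.qBE :=
  ∑ᶠ γ ∈ g.posRoots, (MvPolynomial.C (g.chevCoeff s γ) : QR B) • g.qbrk γ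

/-- The quantum Dunkl element `θ̃_s`. -/
def qdunkl (s : B) : g.qBE :=
  ∑ s' : B, (MvPolynomial.C (g.bil (alr s) (alr s')) : QR B) • g.qeta s'

/-! ### Operators: divided differences and (quantum) Bruhat operators -/

/-- The action of `w ∈ W` on polynomial functions on `V`: `(w·f)(v) = f(σ(w⁻¹)v)`. -/
def polyAct (w : W) : MvPolynomial B ℝ →ₐ[ℝ] MvPolynomial B ℝ :=
  MvPolynomial.aeval fun s => ∑ s' : B, MvPolynomial.C ((g.σ w⁻¹ (alr s')) s) * MvPolynomial.X s'

/-- The linear polynomial `v ↦ (γ, v)`, i.e. `γ` regarded as an element of `S(V*)`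
via the bilinear form. -/
def linPoly (γ : B → ℝ) : MvPolynomial B ℝ :=
  ∑ s : B, MvPolynomial.C (g.bil γ (alr s)) * MvPolynomial.X s

/-- The divided difference (Demazure) operator `∂_γ = (1 - s_γ)/γ` on `S(V*)`. -/
def divDiff (γ : B → ℝ) (f : MvPolynomial B ℝ) : MvPolynomial B ℝ :=
  if h : ∃ q, f - g.polyAct (g.refl γ) f = g.linPoly γ * q then h.choose else 0

/-- The Bruhat operator `s_γ` on the group ring `ℝ⟨W⟩`: `w ↦ w s_γ` if
`l(w s_γ) = l(w) + 1` and `w ↦ 0` otherwise. -/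
def bruhatOp (γ : B → ℝ) : MonoidAlgebra ℝ W →ₗ[ℝ] MonoidAlgebra ℝ W :=
  (MonoidAlgebra.coeffLinearEquiv ℝ).symm.toLinearMap ∘ₗ (Finsupp.lsum ℝ fun w =>
    if g.cs.length (w * g.refl γ) = g.cs.length w + 1
    then Finsupp.lsingle (w * g.refl γ) else 0) ∘ₗ
    (MonoidAlgebra.coeffLinearEquiv ℝ).toLinearMap

/-- `q_{γ∨} = Π_s q_s^{n_s}` where `γ∨ = Σ_s n_s α_s∨`. -/
def qCoroot (γ : B → ℝ) : QR B :=
  ∏ s : B, MvPolynomial.X s ^ ⌊g.chevCoeff s γ⌋₊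

/-- The quantum Bruhat operator `s̃_γ` on the group ring `ℝ[q_s]⟨W⟩`. -/
def qBruhatOp (γ : B → ℝ) : MonoidAlgebra (QR B) W →ₗ[QR B] MonoidAlgebra (QR B) W :=
  (MonoidAlgebra.coeffLinearEquiv (QR B)).symm.toLinearMap ∘ₗ (Finsupp.lsum (QR B) fun w =>
    if g.cs.length (w * g.refl γ) = g.cs.length w + 1
    then Finsupp.lsingle (w * g.refl γ)
    else if (g.cs.length w : ℝ) = g.cs.length (w * g.refl γ) + 2 * g.pairRho γ - 1
    then g.qCoroot γ • Finsupp.lsingle (w * g.refl γ)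
    else 0) ∘ₗ
    (MonoidAlgebra.coeffLinearEquiv (QR B)).toLinearMap

/-- The ideal `I_W ⊂ S(V*)` generated by the `W`-invariant polynomials without
constant term. -/
def invIdeal : Ideal (MvPolynomial B ℝ) :=
  Ideal.span {f | (∀ w : W, g.polyAct w f = f) ∧ MvPolynomial.constantCoeff f = 0}

/-! ### Bruhat graph arrows -/

/-- An arrow `v → w` of the (extended) Bruhat graph:  `w = v s_γ` with `γ > 0` and
`l(w) = l(v) + 1`. -/
def coverArrow (v w : W) : Prop :=
  ∃ γ ∈ g.posRoots, w = v * g.refl γ ∧ g.cs.length w = g.cs.length v + 1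

/-- A quantum arrow `v →_e w` (labelled by the positive root `γ`) of the extended
Bruhat graph: `w = v s_γ` and `l(w) = l(v) - 2(ρ,γ∨) + 1`. -/
def qArrow (γ : B → ℝ) (v w : W) : Prop :=
  γ ∈ g.posRoots ∧ w = v * g.refl γ ∧
    (g.cs.length w : ℝ) = (g.cs.length v : ℝ) - 2 * g.pairRho γ + 1

/-! ### Bernstein–Gelfand–Gelfand polynomials and substitution operators -/

/-- The longest element `w₀` of `W`. -/
def w0 : W :=
  haveI := g.finW
  (Finite.exists_max g.cs.length).choose

/-- A choice of reduced word for `w`. -/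
def chooseWord (w : W) : List B := (g.cs.exists_reduced_word w).choose

/-- `X_{w₀} = |W|⁻¹ Π_{γ ∈ Δ₊} γ`. -/
def XwTop : MvPolynomial B ℝ :=
  MvPolynomial.C ((Nat.card W : ℝ)⁻¹) * ∏ᶠ γ ∈ g.posRoots, g.linPoly γ

/-- The composition of divided difference operators along a word. -/
def applyWord (l : List B) (f : MvPolynomial B ℝ) : MvPolynomial B ℝ :=
  l.foldr (fun s q => g.divDiff (alr s) q) f

/-- The Bernstein–Gelfand–Gelfand polynomial `X_w = ∂_{w⁻¹w₀} X_{w₀}`. -/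
def Xw (w : W) : MvPolynomial B ℝ := g.applyWord (g.chooseWord (w⁻¹ * g.w0)) g.XwTop

/-- `X_w` regarded as a polynomial with coefficients in `ℝ[q_s]`. -/
def XwR (w : W) : MvPolynomial B (QR B) :=
  MvPolynomial.map (algebraMap ℝ (QR B)) (g.Xw w)

/-- The operator on `ℝ[q_s]⟨W⟩` corresponding to the quantum Chevalley element `η̃_s`
via the quantum Bruhat representation. -/
def opEta (s : B) : Module.End (QR B) (MonoidAlgebra (QR B) W) :=
  ∑ᶠ γ ∈ g.posRoots, (MvPolynomial.C (g.chevCoeff s γ) : QR B) • g.qBruhatOp γ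

/-- The operator corresponding to the coordinate function `X_s = (2/(α_s,α_s)) ω_s`
under the substitution `ω_s ↦ η̃_s`. -/
def opX (s : B) : Module.End (QR B) (MonoidAlgebra (QR B) W) :=
  (MvPolynomial.C (2 / g.bil (alr s) (alr s)) : QR B) • g.opEta s

/-- The ordered product `Π_s F(s)^(m s)` (ascending order of `B`). -/
def monProd [LinearOrder B] (F : B → Module.End (QR B) (MonoidAlgebra (QR B) W))
    (m : B →₀ ℕ) : Module.End (QR B) (MonoidAlgebra (QR B) W) :=
  ((Finset.univ.sort (α := B) (· ≤ ·)).map fun s => F s ^ m s).prod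

/-- The operator `[f]` on `ℝ[q_s]⟨W⟩` obtained from `f ∈ S(V*) ⊗ ℝ[q_s]` by the
substitution `ω_s ↦ η̃_s` (and the quantum Bruhat representation); since the
operators `η̃_s` pairwise commute, the ordered products below realize exactly the
substitution of the commuting elements `η̃_s` into `f`. -/
def substOp [LinearOrder B] (f : MvPolynomial B (QR B)) :
    Module.End (QR B) (MonoidAlgebra (QR B) W) :=
  ∑ m ∈ f.support, f.coeff m • monProd g.opX m

/-! ### The twisted group algebra `BE(W,S){W}` -/

/-- Generators `[γ]` inside the free algebra on `Δ ⊕ W`. -/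
def tbrkF (v : B → ℝ) : FreeAlgebra ℝ (g.roots ⊕ W) :=
  if h : v ∈ g.roots then FreeAlgebra.ι ℝ (Sum.inl (⟨v, h⟩ : g.roots)) else 0

/-- Group-like generators `w ∈ W` inside the free algebra on `Δ ⊕ W`. -/
def tgrpF (w : W) : FreeAlgebra ℝ (g.roots ⊕ W) := FreeAlgebra.ι ℝ (Sum.inr w)

def tchainProd (γ : ℤ → (B → ℝ)) (l : ℕ) : FreeAlgebra ℝ (g.roots ⊕ W) :=
  ((List.range l).map fun i => g.tbrkF (γ i)).prod

def tchainProdRev (γ : ℤ → (B → ℝ)) (l : ℕ) : FreeAlgebra ℝ (g.roots ⊕ W) :=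
  (((List.range l).reverse).map fun i => g.tbrkF (γ i)).prod

/-- The defining relations of the twisted group algebra `BE(W,S){W}`:  the relations
of `BE(W,S)`, the group relations of `W`, and the commutation rule
`w [γ] = [w(γ)] w`. -/
inductive TRel : FreeAlgebra ℝ (g.roots ⊕ W) → FreeAlgebra ℝ (g.roots ⊕ W) → Prop
  | neg (γ : B → ℝ) (h : γ ∈ g.roots) : TRel (g.tbrkF (-γ)) (-(g.tbrkF γ))
  | sq (γ : B → ℝ) (h : γ ∈ g.roots) : TRel (g.tbrkF γ * g.tbrkF γ) 0
  | quad (m : ℕ) (γ : ℤ → (B → ℝ)) (hc : g.IsChain m γ) (k : ℕ) (hk1 : 1 ≤ k)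
      (hk2 : 2 * k ≤ m) :
      TRel (∑ i ∈ Finset.range (m + 1), g.tbrkF (γ i) * g.tbrkF (γ (i + k))) 0
  | fourTerm (m : ℕ) (γ : ℤ → (B → ℝ)) (hc : g.IsChain m γ) (hm : 4 ≤ m) :
      TRel (g.tbrkF (γ (m / 2 - 1)) * g.tchainProd γ (2 * (m / 2 - 1) + 1)
          + g.tchainProd γ (2 * (m / 2 - 1) + 1) * g.tbrkF (γ (m / 2 - 1))
          + g.tbrkF (γ (m / 2 - 1)) * g.tchainProdRev γ (2 * (m / 2 - 1) + 1)
          + g.tchainProdRev γ (2 * (m / 2 - 1) + 1) * g.tbrkF (γ (m / 2 - 1))) 0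
  | grpMul (w v : W) : TRel (g.tgrpF w * g.tgrpF v) (g.tgrpF (w * v))
  | grpOne : TRel (g.tgrpF 1) 1
  | comm (w : W) (γ : B → ℝ) (h : γ ∈ g.roots) :
      TRel (g.tgrpF w * g.tbrkF γ) (g.tbrkF (g.σ w γ) * g.tgrpF w)

/-- The twisted group algebra `BE(W,S){W}`. -/
def TwBE : Type := RingQuot g.TRel

instance : Ring g.TwBE := inferInstanceAs (Ring (RingQuot g.TRel))
instance : Algebra ℝ g.TwBE := inferInstanceAs (Algebra ℝ (RingQuot g.TRel))

/-- The element `[γ]` of `BE(W,S){W}`. -/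
def tbrk (v : B → ℝ) : g.TwBE := RingQuot.mkAlgHom ℝ g.TRel (g.tbrkF v)

/-- The element `w` of `BE(W,S){W}`. -/
def tgrp (w : W) : g.TwBE := RingQuot.mkAlgHom ℝ g.TRel (g.tgrpF w)

end GeomCoxeterSystem

open GeomCoxeterSystem

variable {B : Type} [Fintype B] [DecidableEq B] {W : Type} [Group W]


/-! With `⟨β, γ∨⟩ = 2(γ, β)/(γ, γ)` one has `2(ρ, γ∨) = Σ_{β > 0} ⟨β, γ∨⟩` and
`s_γ β = β - ⟨β, γ∨⟩ γ`. The positive roots that `s_γ` keeps positive cancel in pairs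
`β ↔ s_γ β`. A positive root `β` that `s_γ` makes negative has `⟨β, γ∨⟩ ≥ 1` by integrality, and
`⟨γ, γ∨⟩ = 2`, so `2(ρ, γ∨) ≥ N(s_γ) + 1`, where `N(w)` is the number of positive roots that `w`
makes negative. Finally `l(w) ≤ N(w)` by induction on the length; this rests on Tits' lemma
(`w α_i ≥ 0` whenever `l(w s_i) > l(w)`), proved by walking into the rank-two subgroup
`⟨s_i, s_j⟩`, whose roots have coordinates given by Chebyshev polynomials at `cos(π / m(i,j))`. -/

namespace CoxeterSystem

variable {B' W' : Type*} [Group W'] {M : CoxeterMatrix B'} (cs : CoxeterSystem M W')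

theorem wordProd_alternatingWord_succ_inv (i j : B') (k : ℕ) :
    (cs.wordProd (alternatingWord i j (k + 1)))⁻¹ =
      (cs.wordProd (alternatingWord i j k))⁻¹ * cs.simple (if Even k then j else i) := by
  rw [alternatingWord_succ', wordProd_cons, mul_inv_rev, inv_simple]

theorem wordProd_braidWord_eq_mul_simple (i j : B') (hij : M i j ≠ 0) :
    cs.wordProd (alternatingWord i j (M i j)) =
      cs.wordProd (alternatingWord i j (M i j - 1)) * cs.simple i := by
  have hbraid := cs.wordProd_braidWord_eq i j
  rw [braidWord, braidWord, M.symmetric j i] at hbraid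
  rw [hbraid, ← Nat.sub_one_add_one hij, alternatingWord_succ, wordProd_concat,
    Nat.sub_one_add_one hij]

/-- Multiply `w` on the right alternately by `s_j, s_i, s_j, …` as long as this lowers the
length. The walk stops before `m(i,j)` steps, since otherwise the braid relation would make `i`
a right descent of `w`. -/
theorem exists_alternatingWord_descent_walk {w : W'} {i : B'} (j : B')
    (hi : ¬ cs.IsRightDescent w i) :
    ∃ k, (M i j = 0 ∨ k < M i j) ∧
      cs.length (w * (cs.wordProd (alternatingWord i j k))⁻¹) + k = cs.length w ∧
      ¬ cs.IsRightDescent (w * (cs.wordProd (alternatingWord i j k))⁻¹) i ∧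
      ¬ cs.IsRightDescent (w * (cs.wordProd (alternatingWord i j k))⁻¹) j := by
  set u : ℕ → W' := fun k => w * (cs.wordProd (alternatingWord i j k))⁻¹
  set c : ℕ → B' := fun k => if Even k then j else i with hc
  have hu_zero : u 0 = w := by simp [u, alternatingWord]
  have hu_succ (k : ℕ) : u (k + 1) = u k * cs.simple (c k) := by
    simp only [u, c, wordProd_alternatingWord_succ_inv, mul_assoc]
  have hlen (k : ℕ) (hk : ∀ t < k, cs.IsRightDescent (u t) (c t)) :
      cs.length (u k) + k = cs.length w := by
    induction k with
    | zero => simp [hu_zero]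
    | succ k ih =>
      have := cs.isRightDescent_iff.mp (hk k k.lt_succ_self)
      rw [← hu_succ] at this
      have := ih fun t ht => hk t (ht.trans k.lt_succ_self)
      omega
  have hex : ∃ k, ¬ cs.IsRightDescent (u k) (c k) := by
    by_contra! h
    have := hlen (cs.length w + 1) fun t _ => h t
    omega
  have hmin (t : ℕ) (ht : t < Nat.find hex) : cs.IsRightDescent (u t) (c t) :=
    not_not.mp (Nat.find_min hex ht)
  refine ⟨Nat.find hex, ?_, hlen _ hmin, ?_⟩
  · refine or_iff_not_imp_left.mpr fun hM => lt_of_not_ge fun hle => hi ?_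
    have hlenM := hlen (M i j) fun t ht => hmin t (ht.trans_le hle)
    have hws : w * cs.simple i = u (M i j) * cs.wordProd (alternatingWord i j (M i j - 1)) := by
      simp only [u, cs.wordProd_braidWord_eq_mul_simple i j hM, mul_inv_rev, inv_simple]
      group
    have hshort := (cs.length_mul_le (u (M i j)) _).trans
      (Nat.add_le_add_left (cs.length_wordProd_le (alternatingWord i j (M i j - 1))) _)
    rw [← hws, length_alternatingWord] at hshort
    show cs.length (w * cs.simple i) < cs.length w
    omega
  · have hN := Nat.find_spec hex
    rcases Nat.eq_zero_or_eq_succ_pred (Nat.find hex) with h0 | hsucc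
    · rw [h0] at hN ⊢
      change ¬ cs.IsRightDescent (u 0) i ∧ ¬ cs.IsRightDescent (u 0) j
      simp only [hc, Even.zero, if_true, hu_zero] at hN ⊢
      exact ⟨hi, hN⟩
    · set n := (Nat.find hex).pred
      have hprev : ¬ cs.IsRightDescent (u (n + 1)) (c n) := by
        rw [hu_succ]
        exact cs.isRightDescent_iff_not_isRightDescent_mul.mp (hmin n (by omega))
      rw [hsucc] at hN ⊢
      rcases Nat.even_or_odd n with hn | hn
      · simp only [hc, hn, Nat.even_add_one, not_true, if_true, if_false] at hN hprev
        exact ⟨hN, hprev⟩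
      · simp only [hc, Nat.not_even_iff_odd.mpr hn, Nat.even_add_one, not_false_eq_true,
          if_true, if_false] at hN hprev
        exact ⟨hprev, hN⟩

end CoxeterSystem

open CoxeterSystem

lemma alr_nonneg {ι : Type} [DecidableEq ι] (i : ι) : 0 ≤ alr i :=
  Pi.single_nonneg.mpr zero_le_one

lemma alr_ne_zero {ι : Type} [DecidableEq ι] (i : ι) : alr i ≠ 0 :=
  Pi.single_ne_zero_iff.mpr one_ne_zero

namespace GeomCoxeterSystem

variable (g : GeomCoxeterSystem B W)

@[simp]
lemma σ_mul_apply (w w' : W) (v : B → ℝ) : g.σ (w * w') v = g.σ w (g.σ w' v) := by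
  rw [map_mul]; rfl

@[simp]
lemma σ_one_apply (v : B → ℝ) : g.σ 1 v = v := by
  rw [map_one]; rfl

@[simp]
lemma σ_apply_σ_inv (w : W) (v : B → ℝ) : g.σ w (g.σ w⁻¹ v) = v := by
  rw [← σ_mul_apply, mul_inv_cancel, σ_one_apply]

lemma σ_simple_σ_simple (i : B) (v : B → ℝ) :
    g.σ (g.cs.simple i) (g.σ (g.cs.simple i) v) = v := by
  rw [← σ_mul_apply, g.cs.simple_mul_simple_self, σ_one_apply]

/-- `⟨β, γ∨⟩ = 2(γ, β)/(γ, γ)`. -/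
def pairing (γ β : B → ℝ) : ℝ := 2 * g.bil γ β / g.bil γ γ

lemma σ_simple_apply (i : B) (v : B → ℝ) :
    g.σ (g.cs.simple i) v = v - g.pairing (alr i) v • alr i :=
  g.σ_simple i v

lemma σ_simple_apply_of_ne {i k : B} (hki : k ≠ i) (v : B → ℝ) :
    g.σ (g.cs.simple i) v k = v k := by
  simp [σ_simple_apply, alr, hki]

lemma bil_σ_simple_σ_simple (i : B) (u v : B → ℝ) :
    g.bil (g.σ (g.cs.simple i) u) (g.σ (g.cs.simple i) v) = g.bil u v := by
  have hd := (g.bil_diag_pos i).ne'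
  simp only [σ_simple_apply, pairing, map_sub, map_smul, LinearMap.sub_apply,
    LinearMap.smul_apply, smul_eq_mul, g.bil_symm u (alr i), g.bil_symm (alr i) v]
  field_simp
  ring

lemma bil_σ_σ (w : W) (u v : B → ℝ) : g.bil (g.σ w u) (g.σ w v) = g.bil u v := by
  induction w using g.cs.simple_induction generalizing u v with
  | simple i => exact g.bil_σ_simple_σ_simple i u v
  | one => simp
  | mul w w' hw hw' => simp [hw, hw']

lemma alr_mem_roots (i : B) : alr i ∈ g.roots := ⟨(1, i), by simp⟩

lemma σ_mem_roots (w : W) {γ : B → ℝ} (hγ : γ ∈ g.roots) : g.σ w γ ∈ g.roots := by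
  obtain ⟨⟨w', i⟩, rfl⟩ := hγ
  exact ⟨(w * w', i), by simp⟩

lemma bil_self_pos {γ : B → ℝ} (hγ : γ ∈ g.roots) : 0 < g.bil γ γ := by
  obtain ⟨⟨w, i⟩, rfl⟩ := hγ
  simpa [bil_σ_σ] using g.bil_diag_pos i

lemma ne_zero_of_mem_roots {γ : B → ℝ} (hγ : γ ∈ g.roots) : γ ≠ 0 := by
  rintro rfl
  simpa using g.bil_self_pos hγ

lemma pairing_self {γ : B → ℝ} (hγ : γ ∈ g.roots) : g.pairing γ γ = 2 := by
  have := (g.bil_self_pos hγ).ne'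
  rw [pairing]
  field_simp

lemma σ_refl_apply {γ : B → ℝ} (hγ : γ ∈ g.roots) (v : B → ℝ) :
    g.σ (g.refl γ) v = v - g.pairing γ v • γ := by
  obtain ⟨⟨w, i⟩, rfl⟩ := hγ
  have hbil : g.bil (g.σ w (alr i)) v = g.bil (alr i) (g.σ w⁻¹ v) := by
    rw [← g.bil_σ_σ w⁻¹, ← σ_mul_apply, inv_mul_cancel, σ_one_apply]
  simp only [g.refl_spec, σ_mul_apply, σ_simple_apply, map_sub, map_smul, pairing, hbil,
    bil_σ_σ, σ_apply_σ_inv]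

lemma σ_refl_self {γ : B → ℝ} (hγ : γ ∈ g.roots) : g.σ (g.refl γ) γ = -γ := by
  rw [g.σ_refl_apply hγ, g.pairing_self hγ, two_smul, sub_add_cancel_left]

lemma pairing_σ_refl {γ : B → ℝ} (hγ : γ ∈ g.roots) (β : B → ℝ) :
    g.pairing γ (g.σ (g.refl γ) β) = -g.pairing γ β := by
  have := (g.bil_self_pos hγ).ne'
  simp only [pairing, σ_refl_apply g hγ, map_sub, map_smul, smul_eq_mul]
  field_simp
  ring

lemma σ_refl_σ_refl {γ : B → ℝ} (hγ : γ ∈ g.roots) (β : B → ℝ) :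
    g.σ (g.refl γ) (g.σ (g.refl γ) β) = β := by
  rw [g.σ_refl_apply hγ (g.σ _ β), g.pairing_σ_refl hγ, g.σ_refl_apply hγ, neg_smul,
    sub_neg_eq_add, sub_add_cancel]

lemma refl_alr (i : B) : g.refl (alr i) = g.cs.simple i := by
  simpa using g.refl_spec 1 i

lemma σ_simple_alr_self (i : B) : g.σ (g.cs.simple i) (alr i) = -alr i := by
  simpa [refl_alr] using g.σ_refl_self (g.alr_mem_roots i)

/-- `U_k(cos(π/m))`, which equals `sin((k+1)π/m) / sin(π/m)` when `m ≥ 2`, and `k + 1`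
when `m = 0`, i.e. `m(i,j) = ∞` (then `π / m = 0` in Lean). -/
def dihedralCoeff (m : ℕ) (k : ℤ) : ℝ :=
  (Polynomial.Chebyshev.U ℝ k).eval (Real.cos (Real.pi / m))

lemma dihedralCoeff_add_two (m : ℕ) (k : ℤ) :
    dihedralCoeff m (k + 2) =
      2 * Real.cos (Real.pi / m) * dihedralCoeff m (k + 1) - dihedralCoeff m k := by
  simp [dihedralCoeff, Polynomial.Chebyshev.U_add_two]

open Polynomial.Chebyshev in
lemma dihedralCoeff_nonneg {m : ℕ} (hm : m ≠ 1) {n : ℤ} (hn : -1 ≤ n) (hnm : m = 0 ∨ n < m) :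
    0 ≤ dihedralCoeff m n := by
  rw [dihedralCoeff]
  rcases eq_or_ne m 0 with rfl | hm0
  · simp only [Nat.cast_zero, div_zero, Real.cos_zero, U_eval_one]
    linarith [(by exact_mod_cast hn : (-1 : ℝ) ≤ n)]
  replace hnm := hnm.resolve_left hm0
  have hm2 : (2 : ℝ) ≤ m := by exact_mod_cast (show 2 ≤ m by omega)
  have hθ : 0 < Real.pi / m := by positivity
  have hsin : 0 < Real.sin (Real.pi / m) :=
    Real.sin_pos_of_pos_of_lt_pi hθ (div_lt_self Real.pi_pos (by linarith))
  refine nonneg_of_mul_nonneg_left ?_ hsin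
  rw [U_real_cos]
  have hn1 : (0 : ℝ) ≤ n + 1 := by linarith [(by exact_mod_cast hn : (-1 : ℝ) ≤ n)]
  have hnm1 : (n : ℝ) + 1 ≤ m := by exact_mod_cast (show n + 1 ≤ m by omega)
  apply Real.sin_nonneg_of_nonneg_of_le_pi (by positivity)
  calc ((n : ℝ) + 1) * (Real.pi / m) ≤ m * (Real.pi / m) := by gcongr
    _ = Real.pi := by field_simp

def unitAlr (i : B) : B → ℝ := (√(g.bil (alr i) (alr i)))⁻¹ • alr i

lemma σ_simple_unitAlr_self (i : B) : g.σ (g.cs.simple i) (g.unitAlr i) = -g.unitAlr i := by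
  rw [unitAlr, map_smul, σ_simple_alr_self, smul_neg]

lemma σ_simple_unitAlr_of_ne {i j : B} (hij : i ≠ j) :
    g.σ (g.cs.simple j) (g.unitAlr i) =
      g.unitAlr i + (2 * Real.cos (Real.pi / g.M i j)) • g.unitAlr j := by
  have hdi := g.bil_diag_pos i
  have hdj := g.bil_diag_pos j
  have hoff := g.bil_offdiag j i hij.symm
  rw [g.M.symmetric j i, Real.sqrt_mul hdj.le] at hoff
  simp only [unitAlr, map_smul, σ_simple_apply, pairing, hoff, smul_sub, smul_smul]
  rw [sub_eq_add_neg, ← neg_smul]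
  congr 2
  set a := √(g.bil (alr i) (alr i))
  set b := √(g.bil (alr j) (alr j))
  have hb : b ^ 2 = g.bil (alr j) (alr j) := Real.sq_sqrt hdj.le
  have : 0 < a := Real.sqrt_pos.mpr hdi
  have : 0 < b := Real.sqrt_pos.mpr hdj
  rw [← hb]
  field_simp

lemma σ_alternatingWord_unitAlr {i j : B} (hij : i ≠ j) (n : ℕ) :
    g.σ (g.cs.wordProd (alternatingWord i j (2 * n))) (g.unitAlr i) =
        dihedralCoeff (g.M i j) (2 * n) • g.unitAlr i +
          dihedralCoeff (g.M i j) (2 * n - 1) • g.unitAlr j ∧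
      g.σ (g.cs.wordProd (alternatingWord i j (2 * n + 1))) (g.unitAlr i) =
        dihedralCoeff (g.M i j) (2 * n) • g.unitAlr i +
          dihedralCoeff (g.M i j) (2 * n + 1) • g.unitAlr j := by
  have hsucc (k : ℕ) : g.cs.wordProd (alternatingWord i j (k + 1)) =
      g.cs.simple (if Even k then j else i) * g.cs.wordProd (alternatingWord i j k) := by
    rw [alternatingWord_succ', wordProd_cons]
  have hodd (n : ℕ)
      (h : g.σ (g.cs.wordProd (alternatingWord i j (2 * n))) (g.unitAlr i) =
        dihedralCoeff (g.M i j) (2 * n) • g.unitAlr i +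
          dihedralCoeff (g.M i j) (2 * n - 1) • g.unitAlr j) :
      g.σ (g.cs.wordProd (alternatingWord i j (2 * n + 1))) (g.unitAlr i) =
        dihedralCoeff (g.M i j) (2 * n) • g.unitAlr i +
          dihedralCoeff (g.M i j) (2 * n + 1) • g.unitAlr j := by
    have hrec := dihedralCoeff_add_two (g.M i j) (2 * n - 1)
    rw [show (2 * n - 1 : ℤ) + 2 = 2 * n + 1 by ring, sub_add_cancel] at hrec
    rw [hsucc, if_pos (even_two_mul n), σ_mul_apply, h, map_add, map_smul, map_smul,
      g.σ_simple_unitAlr_of_ne hij, σ_simple_unitAlr_self, hrec]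
    module
  induction n with
  | zero => refine ⟨?_, hodd 0 ?_⟩ <;> simp [alternatingWord, dihedralCoeff]
  | succ n ih =>
    have heven : g.σ (g.cs.wordProd (alternatingWord i j (2 * (n + 1)))) (g.unitAlr i) =
        dihedralCoeff (g.M i j) (2 * (n + 1 : ℕ)) • g.unitAlr i +
          dihedralCoeff (g.M i j) (2 * (n + 1 : ℕ) - 1) • g.unitAlr j := by
      have hrec := dihedralCoeff_add_two (g.M i j) (2 * n)
      rw [show 2 * (n + 1) = 2 * n + 1 + 1 by ring, hsucc,
        if_neg (Nat.not_even_iff_odd.mpr (odd_two_mul_add_one n)), σ_mul_apply, ih.2, map_add,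
        map_smul, map_smul, σ_simple_unitAlr_self, g.σ_simple_unitAlr_of_ne hij.symm,
        g.M.symmetric j i]
      push_cast
      rw [show (2 * (n + 1) - 1 : ℤ) = 2 * n + 1 by ring,
        show (2 * (n + 1) : ℤ) = 2 * n + 2 by ring, hrec]
      module
    exact ⟨heven, hodd _ heven⟩

lemma σ_mul_alternatingWord_alr_nonneg {i j : B} (hij : i ≠ j) {k : ℕ}
    (hk : g.M i j = 0 ∨ k < g.M i j) {w : W} (hi : 0 ≤ g.σ w (alr i))
    (hj : 0 ≤ g.σ w (alr j)) :
    0 ≤ g.σ (w * g.cs.wordProd (alternatingWord i j k)) (alr i) := by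
  have hunit (l : B) (hl : 0 ≤ g.σ w (alr l)) : 0 ≤ g.σ w (g.unitAlr l) := by
    rw [unitAlr, map_smul]
    exact smul_nonneg (by positivity) hl
  have hU (l : ℤ) (hl : -1 ≤ l) (hlk : l ≤ k) : 0 ≤ dihedralCoeff (g.M i j) l :=
    dihedralCoeff_nonneg (g.M.off_diagonal i j hij) hl (hk.imp_right fun h => by omega)
  have halr : alr i = √(g.bil (alr i) (alr i)) • g.unitAlr i := by
    rw [unitAlr, smul_smul, mul_inv_cancel₀ (Real.sqrt_pos.mpr (g.bil_diag_pos i)).ne', one_smul]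
  rw [halr, map_smul, σ_mul_apply]
  refine smul_nonneg (Real.sqrt_nonneg _) ?_
  obtain ⟨n, rfl | rfl⟩ := Nat.even_or_odd' k
  · rw [(g.σ_alternatingWord_unitAlr hij n).1, map_add, map_smul, map_smul]
    exact add_nonneg (smul_nonneg (hU _ (by omega) (by push_cast; omega)) (hunit i hi))
      (smul_nonneg (hU _ (by omega) (by push_cast; omega)) (hunit j hj))
  · rw [(g.σ_alternatingWord_unitAlr hij n).2, map_add, map_smul, map_smul]
    exact add_nonneg (smul_nonneg (hU _ (by omega) (by push_cast; omega)) (hunit i hi))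
      (smul_nonneg (hU _ (by omega) (by push_cast; omega)) (hunit j hj))

theorem σ_alr_nonneg_of_not_isRightDescent {w : W} {i : B} (hi : ¬ g.cs.IsRightDescent w i) :
    0 ≤ g.σ w (alr i) := by
  induction hn : g.cs.length w using Nat.strong_induction_on generalizing w i with
  | _ n ih =>
  by_cases hw : w = 1
  · simpa [hw] using alr_nonneg i
  obtain ⟨j, hj⟩ := g.cs.exists_rightDescent_of_ne_one hw
  have hij : i ≠ j := by rintro rfl; exact hi hj
  obtain ⟨k, hk, hlen, hui, huj⟩ := g.cs.exists_alternatingWord_descent_walk j hi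
  have hk0 : k ≠ 0 := by
    rintro rfl
    simp only [alternatingWord, wordProd_nil, inv_one, mul_one] at huj
    exact huj hj
  rw [← inv_mul_cancel_right w (g.cs.wordProd (alternatingWord i j k))]
  exact g.σ_mul_alternatingWord_alr_nonneg hij hk (ih _ (by omega) hui rfl)
    (ih _ (by omega) huj rfl)

theorem nonneg_or_nonpos_of_mem_roots {γ : B → ℝ} (hγ : γ ∈ g.roots) : 0 ≤ γ ∨ γ ≤ 0 := by
  obtain ⟨⟨w, i⟩, rfl⟩ := hγ
  by_cases hi : g.cs.IsRightDescent w i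
  · right
    have h := g.σ_alr_nonneg_of_not_isRightDescent
      (g.cs.isRightDescent_iff_not_isRightDescent_mul.mp hi)
    rwa [σ_mul_apply, σ_simple_alr_self, map_neg, neg_nonneg] at h
  · exact Or.inl (g.σ_alr_nonneg_of_not_isRightDescent hi)

lemma posRoots_finite : g.posRoots.Finite :=
  have := g.finW
  (Set.finite_range _).subset fun _ hv => hv.1

def posRootFinset : Finset (B → ℝ) := g.posRoots_finite.toFinset

lemma mem_posRootFinset {β : B → ℝ} : β ∈ g.posRootFinset ↔ β ∈ g.roots ∧ 0 ≤ β :=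
  Set.Finite.mem_toFinset _

def inversions (w : W) : Finset (B → ℝ) := g.posRootFinset.filter fun β => ¬ 0 ≤ g.σ w β

lemma mem_inversions_refl_self {γ : B → ℝ} (hγ : γ ∈ g.posRoots) :
    γ ∈ g.inversions (g.refl γ) := by
  have hpos : (0 : B → ℝ) ≤ γ := hγ.2
  simp only [inversions, Finset.mem_filter, mem_posRootFinset, g.σ_refl_self hγ.1]
  exact ⟨hγ, fun h => (hpos.lt_of_ne' (g.ne_zero_of_mem_roots hγ.1)).not_ge (neg_nonneg.mp h)⟩

lemma alr_mem_inversions_mul_simple {w : W} {j : B} (hj : ¬ g.cs.IsRightDescent w j) :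
    alr j ∈ g.inversions (w * g.cs.simple j) := by
  have hpos := g.σ_alr_nonneg_of_not_isRightDescent hj
  have hne : g.σ w (alr j) ≠ 0 := (map_ne_zero_iff _ (g.σ w).injective).mpr (alr_ne_zero j)
  simp only [inversions, Finset.mem_filter, mem_posRootFinset, σ_mul_apply, σ_simple_alr_self,
    map_neg]
  exact ⟨⟨g.alr_mem_roots j, alr_nonneg j⟩, fun h => (hpos.lt_of_ne' hne).not_ge (neg_nonneg.mp h)⟩

/-- The only positive roots that `s_j` makes negative are multiples of `α_j`, and those are not
inversions of `w`. -/
lemma σ_simple_mem_inversions_mul_simple {w : W} {j : B} (hj : ¬ g.cs.IsRightDescent w j)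
    {β : B → ℝ} (hβ : β ∈ g.inversions w) :
    g.σ (g.cs.simple j) β ∈ (g.inversions (w * g.cs.simple j)).erase (alr j) := by
  simp only [inversions, Finset.mem_filter, mem_posRootFinset] at hβ
  obtain ⟨⟨hβr, hβpos⟩, hβinv⟩ := hβ
  have hpos : 0 ≤ g.σ (g.cs.simple j) β := by
    refine (g.nonneg_or_nonpos_of_mem_roots (g.σ_mem_roots _ hβr)).resolve_right fun hneg => ?_
    have hβj : β = β j • alr j := by
      funext k
      by_cases hk : k = j
      · simp [hk, alr]
      · have := hneg k
        rw [g.σ_simple_apply_of_ne hk] at this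
        simp [alr, hk, le_antisymm this (hβpos k)]
    apply hβinv
    rw [hβj, map_smul]
    exact smul_nonneg (hβpos j) (g.σ_alr_nonneg_of_not_isRightDescent hj)
  refine Finset.mem_erase.mpr ⟨fun h => ?_, ?_⟩
  · have := hβpos j
    rw [← g.σ_simple_σ_simple j β, h, σ_simple_alr_self] at this
    norm_num [alr] at this
  · simp only [inversions, Finset.mem_filter, mem_posRootFinset, σ_mul_apply, σ_simple_σ_simple]
    exact ⟨⟨g.σ_mem_roots _ hβr, hpos⟩, hβinv⟩

theorem length_le_card_inversions (w : W) : g.cs.length w ≤ (g.inversions w).card := by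
  induction hn : g.cs.length w using Nat.strong_induction_on generalizing w with
  | _ n ih =>
  by_cases hw : w = 1
  · simp [← hn, hw]
  obtain ⟨j, hj⟩ := g.cs.exists_rightDescent_of_ne_one hw
  set w' := w * g.cs.simple j
  have hlen : g.cs.length w' + 1 = g.cs.length w := g.cs.isRightDescent_iff.mp hj
  have hj' : ¬ g.cs.IsRightDescent w' j := g.cs.isRightDescent_iff_not_isRightDescent_mul.mp hj
  have hw' : w' * g.cs.simple j = w := by simp [w', mul_assoc]
  have hcard : (g.inversions w').card ≤ ((g.inversions w).erase (alr j)).card :=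
    Finset.card_le_card_of_injOn _ (fun β hβ => hw' ▸ g.σ_simple_mem_inversions_mul_simple hj' hβ)
      (g.σ (g.cs.simple j)).injective.injOn
  rw [Finset.card_erase_of_mem (hw' ▸ g.alr_mem_inversions_mul_simple hj')] at hcard
  have := ih _ (by omega) w' rfl
  have := Finset.card_pos.mpr ⟨_, hw' ▸ g.alr_mem_inversions_mul_simple hj'⟩
  omega

lemma two_mul_pairRho_eq_sum (γ : B → ℝ) :
    2 * g.pairRho γ = ∑ β ∈ g.posRootFinset, g.pairing γ β := by
  rw [pairRho, g.bil_symm, rho, finsum_mem_eq_finite_toFinset_sum _ g.posRoots_finite, map_smul,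
    map_sum, smul_eq_mul, Finset.mul_sum, Finset.mul_sum, Finset.sum_div, Finset.mul_sum]
  refine Finset.sum_congr rfl fun β _ => ?_
  rw [pairing]
  ring

/-- The non-inversions of `s_γ` cancel in pairs `β ↔ s_γ β`, since `⟨s_γ β, γ∨⟩ = -⟨β, γ∨⟩`. -/
lemma sum_pairing_filter_nonneg_σ_refl {γ : B → ℝ} (hγ : γ ∈ g.roots) :
    ∑ β ∈ g.posRootFinset.filter (fun β => 0 ≤ g.σ (g.refl γ) β), g.pairing γ β = 0 := by
  refine Finset.sum_involution (fun β _ => g.σ (g.refl γ) β)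
    (fun β _ => by rw [g.pairing_σ_refl hγ, add_neg_cancel]) (fun β _ hne hfix => hne ?_)
    (fun β hβ => ?_) (fun β _ => g.σ_refl_σ_refl hγ β)
  · linarith [hfix ▸ g.pairing_σ_refl hγ β]
  · simp only [Finset.mem_filter, mem_posRootFinset] at hβ ⊢
    exact ⟨⟨g.σ_mem_roots _ hβ.1.1, hβ.2⟩, by rw [g.σ_refl_σ_refl hγ]; exact hβ.1.2⟩

lemma one_le_pairing_of_mem_inversions_refl (hcr : g.IsCrystallographic) {γ : B → ℝ}
    (hγ : γ ∈ g.posRoots) {β : B → ℝ} (hβ : β ∈ g.inversions (g.refl γ)) :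
    1 ≤ g.pairing γ β := by
  simp only [inversions, Finset.mem_filter, mem_posRootFinset] at hβ
  obtain ⟨⟨hβr, hβpos⟩, hβinv⟩ := hβ
  obtain ⟨k, hk⟩ := hcr γ hγ.1 β hβr
  change g.pairing γ β = k at hk
  rw [hk]
  by_contra! hlt
  have hk0 : (k : ℝ) ≤ 0 := by exact_mod_cast Int.lt_add_one_iff.mp (by exact_mod_cast hlt)
  apply hβinv
  rw [g.σ_refl_apply hγ.1, hk, sub_eq_add_neg, ← neg_smul]
  exact add_nonneg hβpos (smul_nonneg (neg_nonneg.mpr hk0) hγ.2)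

lemma card_inversions_refl_add_one_le (hcr : g.IsCrystallographic) {γ : B → ℝ}
    (hγ : γ ∈ g.posRoots) :
    ((g.inversions (g.refl γ)).card : ℝ) + 1 ≤
      ∑ β ∈ g.inversions (g.refl γ), g.pairing γ β := by
  have := Finset.single_le_sum (f := fun β => g.pairing γ β - 1)
    (fun β hβ => sub_nonneg.mpr (g.one_le_pairing_of_mem_inversions_refl hcr hγ hβ))
    (g.mem_inversions_refl_self hγ)
  simp only [Finset.sum_sub_distrib, g.pairing_self hγ.1, Finset.sum_const, nsmul_eq_mul,
    mul_one] at this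
  linarith

end GeomCoxeterSystem

/-- For a finite crystallographic Coxeter system and every positive
root `γ`, one has `2(ρ, γ∨) - 1 ≥ l(s_γ)`. -/
theorem length_of_reflection_le (g : GeomCoxeterSystem B W)
    (hcr : g.IsCrystallographic) (γ : B → ℝ) (hγ : γ ∈ g.posRoots) :
    (g.cs.length (g.refl γ) : ℝ) ≤ 2 * g.pairRho γ - 1 := by
  have hsplit : ∑ β ∈ g.inversions (g.refl γ), g.pairing γ β =
      ∑ β ∈ g.posRootFinset, g.pairing γ β := by
    rw [← Finset.sum_filter_add_sum_filter_not g.posRootFinset (fun β => 0 ≤ g.σ (g.refl γ) β),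
      g.sum_pairing_filter_nonneg_σ_refl hγ.1, zero_add, inversions]
  have hlen : (g.cs.length (g.refl γ) : ℝ) ≤ (g.inversions (g.refl γ)).card := by
    exact_mod_cast g.length_le_card_inversions _
  rw [g.two_mul_pairRho_eq_sum, ← hsplit]
  linarith [g.card_inversions_refl_add_one_le hcr hγ]
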